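/- arXiv:2506.23313 — 3 statements merged into one kernel-verified Lean document; each statement's English description precedes it below -/
import Mathlib

section
/- Let (X,G) be a transitive topological dynamical system (G countably infinite discrete amenable) and m ∈ ℕ. Then (X,G) is either almost frequently m-stable (the set of frequent m-stability points is a dense G_δ set) or strongly m-spreading (there exists ε > 0 such that uBD({g ∈ G : diam_m(gU) < ε}) = 0 for every nonempty open U ⊆ X), and these alternatives are mutually exclusive. -/
open Filter Metric Set Pointwise MulAction
open scoped Classical

noncomputable def folnerAvg {G : Type*} (F : ℕ → Finset G) (φ : G → ℝ) (n : ℕ) : ℝ :=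
  (∑ g ∈ F n, φ g) / (F n).card

/-- A Følner sequence: nonempty finite sets with `|F_n △ K F_n| / |F_n| → 0`. -/
def IsFolner {G : Type*} [Group G] (F : ℕ → Finset G) : Prop :=
  (∀ n, (F n).Nonempty) ∧
  ∀ K : Finset G, K.Nonempty →
    Tendsto (fun n =>
      ((symmDiff (F n) (Finset.image₂ (· * ·) K (F n))).card : ℝ) / (F n).card)
      atTop (nhds 0)

/-- Upper Banach density: sup over Følner sequences of the upper density. -/
noncomputable def uBD {G : Type*} [Group G] (S : Set G) : ℝ :=
  sSup {a | ∃ F : ℕ → Finset G, IsFolner F ∧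
    a = limsup (folnerAvg F (S.indicator fun _ => (1 : ℝ))) atTop}

/-- Lower Banach density: inf over Følner sequences of the lower density. -/
noncomputable def lBD {G : Type*} [Group G] (S : Set G) : ℝ :=
  sInf {a | ∃ F : ℕ → Finset G, IsFolner F ∧
    a = liminf (folnerAvg F (S.indicator fun _ => (1 : ℝ))) atTop}

/-- `sup_F limsup_n (1/|F_n|) Σ_{g ∈ F_n} φ(g)`. -/
noncomputable def supFolnerLimsup {G : Type*} [Group G] (φ : G → ℝ) : ℝ :=
  sSup {a | ∃ F : ℕ → Finset G, IsFolner F ∧ a = limsup (folnerAvg F φ) atTop}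

/-- Minimal pairwise distance of an `m`-tuple. -/
noncomputable def minDist {X : Type*} [MetricSpace X] (m : ℕ) (x : Fin m → X) : ℝ :=
  sInf {r | ∃ i j : Fin m, i < j ∧ r = dist (x i) (x j)}

/-- `diam_m(A)`: sup over `m`-tuples in `A` of the minimal pairwise distance. -/
noncomputable def diamm {X : Type*} [MetricSpace X] (m : ℕ) (A : Set X) : ℝ :=
  sSup {r | ∃ x : Fin m → X, (∀ i, x i ∈ A) ∧ r = minDist m x}

section Dyn

variable (G : Type*) [Group G] (X : Type*) [MetricSpace X] [MulAction G X]

/-- `FS^m_ε`: points `x` admitting `δ > 0` with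
`uBD {g : diam_m(g B(x,δ)) < ε} > 0`. -/
noncomputable def FSset (m : ℕ) (ε : ℝ) : Set X :=
  {x : X | ∃ δ > 0, 0 < uBD {g : G | diamm m (g • ball x δ) < ε}}

/-- `x` is a frequent `m`-stability point. -/
def IsFreqStablePt (m : ℕ) (x : X) : Prop :=
  ∀ ε > 0, ∃ δ > 0, ∀ A : Set X, x ∈ A → Metric.diam A < δ →
    0 < uBD {g : G | diamm m (g • A) < ε}

/-- The set of frequent `m`-stability points. -/
def FreqStablePts (m : ℕ) : Set X := {x : X | IsFreqStablePt G X m x}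

/-- `(X,G)` is frequently `m`-stable. -/
def FreqStable (m : ℕ) : Prop :=
  ∀ ε > 0, ∃ δ > 0, ∀ A : Set X, Metric.diam A < δ →
    0 < uBD {g : G | diamm m (g • A) < ε}

/-- `(X,G)` is strongly `m`-spreading. -/
def StronglySpreading (m : ℕ) : Prop :=
  ∃ ε > 0, ∀ U : Set X, IsOpen U → U.Nonempty →
    uBD {g : G | diamm m (g • U) < ε} = 0

/-- `DE^m_ε`: points admitting `δ > 0` with
`sup_F limsup_n (1/|F_n|) Σ_{g∈F_n} diam_m(g B(x,δ)) < ε`. -/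
noncomputable def DEset (m : ℕ) (ε : ℝ) : Set X :=
  {x : X | ∃ δ > 0, supFolnerLimsup (fun g : G => diamm m (g • ball x δ)) < ε}

/-- The set of diam-mean `m`-equicontinuity points. -/
noncomputable def DEpts (m : ℕ) : Set X :=
  {x : X | ∀ ε > 0, ∃ δ > 0,
    supFolnerLimsup (fun g : G => diamm m (g • ball x δ)) < ε}

/-- `(X,G)` is diam-mean `m`-sensitive. -/
def DiamMeanSensitive (m : ℕ) : Prop :=
  ∃ ε > 0, ∀ U : Set X, IsOpen U → U.Nonempty →
    ε ≤ supFolnerLimsup (fun g : G => diamm m (g • U))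

/-- `(X,G)` is diam-mean `m`-equicontinuous. -/
def DiamMeanEquicont (m : ℕ) : Prop :=
  ∀ ε > 0, ∃ δ > 0, ∀ U : Set X, diamm m U < δ →
    supFolnerLimsup (fun g : G => diamm m (g • U)) < ε

/-- A weakly mean-sensitive `m`-tuple. -/
def IsWMSTuple {m : ℕ} (x : Fin m → X) : Prop :=
  ∀ U : Fin m → Set X, (∀ k, IsOpen (U k)) → (∀ k, x k ∈ U k) →
    ∃ η > 0, ∀ V : Set X, IsOpen V → V.Nonempty →
      η < uBD {g : G | ∀ k, ((g • V) ∩ U k).Nonempty}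

end Dyn

section Helpers
variable {G : Type*} [Group G]

lemma avg_ind_nonneg (F : ℕ → Finset G) (S : Set G) (n : ℕ) :
    0 ≤ folnerAvg F (S.indicator fun _ => (1:ℝ)) n := by
  apply div_nonneg _ (by positivity)
  exact Finset.sum_nonneg fun g _ => Set.indicator_nonneg (fun _ _ => zero_le_one) g

lemma avg_ind_le_one (F : ℕ → Finset G) (hF : ∀ n, (F n).Nonempty) (S : Set G) (n : ℕ) :
    folnerAvg F (S.indicator fun _ => (1:ℝ)) n ≤ 1 := by
  rw [folnerAvg, div_le_one (by exact_mod_cast (hF n).card_pos)]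
  calc ∑ g ∈ F n, S.indicator (fun _ => (1:ℝ)) g
      ≤ ∑ _g ∈ F n, (1:ℝ) := Finset.sum_le_sum fun g _ => by
        by_cases h : g ∈ S <;> simp [Set.indicator_apply, h]
    _ = (F n).card := by simp

lemma limsup_ind_nonneg (F : ℕ → Finset G) (hF : ∀ n, (F n).Nonempty) (S : Set G) :
    0 ≤ limsup (folnerAvg F (S.indicator fun _ => (1:ℝ))) atTop :=
  le_limsup_of_frequently_le (Frequently.of_forall fun n => avg_ind_nonneg F S n)
    (isBoundedUnder_of ⟨1, fun n => avg_ind_le_one F hF S n⟩)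

lemma avg_cobounded (F : ℕ → Finset G) (S : Set G) :
    IsCoboundedUnder (· ≤ ·) atTop (folnerAvg F (S.indicator fun _ => (1:ℝ))) := by
  have h : IsBoundedUnder (· ≥ ·) atTop (folnerAvg F (S.indicator fun _ => (1:ℝ))) :=
    isBoundedUnder_of ⟨0, fun n => avg_ind_nonneg F S n⟩
  exact h.isCoboundedUnder_le

lemma limsup_ind_le_one (F : ℕ → Finset G) (hF : ∀ n, (F n).Nonempty) (S : Set G) :
    limsup (folnerAvg F (S.indicator fun _ => (1:ℝ))) atTop ≤ 1 :=
  limsup_le_of_le (avg_cobounded F S)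
    (Eventually.of_forall fun n => avg_ind_le_one F hF S n)

lemma uBD_bddAbove (S : Set G) :
    BddAbove {a | ∃ F : ℕ → Finset G, IsFolner F ∧
      a = limsup (folnerAvg F (S.indicator fun _ => (1 : ℝ))) atTop} := by
  refine ⟨1, ?_⟩
  rintro a ⟨F, hF, rfl⟩
  exact limsup_ind_le_one F hF.1 S

lemma le_uBD (F : ℕ → Finset G) (hF : IsFolner F) (S : Set G) :
    limsup (folnerAvg F (S.indicator fun _ => (1:ℝ))) atTop ≤ uBD S :=
  le_csSup (uBD_bddAbove S) ⟨F, hF, rfl⟩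

lemma uBD_nonneg (hG : ∃ F : ℕ → Finset G, IsFolner F) (S : Set G) : 0 ≤ uBD S := by
  obtain ⟨F, hF⟩ := hG
  exact le_trans (limsup_ind_nonneg F hF.1 S) (le_uBD F hF S)

lemma uBD_mono (hG : ∃ F : ℕ → Finset G, IsFolner F) {S T : Set G} (h : S ⊆ T) :
    uBD S ≤ uBD T := by
  refine Real.sSup_le ?_ (uBD_nonneg hG T)
  rintro a ⟨F, hF, rfl⟩
  refine le_trans (limsup_le_limsup (Eventually.of_forall fun n => ?_)
    (avg_cobounded F S)
    (isBoundedUnder_of ⟨1, fun n => avg_ind_le_one F hF.1 T n⟩)) (le_uBD F hF T)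
  refine div_le_div_of_nonneg_right ?_ ((Nat.cast_pos.2 (hF.1 n).card_pos).le)
  exact Finset.sum_le_sum fun g _ =>
    Set.indicator_le_indicator_of_subset h (fun _ => zero_le_one) g

lemma uBD_translate_le (hG : ∃ F : ℕ → Finset G, IsFolner F) (g : G) (S : Set G) :
    uBD ((fun k => k * g) ⁻¹' S) ≤ uBD S := by
  refine Real.sSup_le ?_ (uBD_nonneg hG S)
  rintro a ⟨F, hF, rfl⟩
  set e := (Equiv.mulRight g).toEmbedding with he
  set F' : ℕ → Finset G := fun n => (F n).map e with hF'def
  have hmap : ∀ A : Finset G, ∀ z : G, z ∈ A.map e ↔ z * g⁻¹ ∈ A := by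
    intro A z
    rw [he, Finset.mem_map_equiv]
    simp
  have hsd : ∀ A B : Finset G, symmDiff (A.map e) (B.map e) = (symmDiff A B).map e := by
    intro A B; ext z; simp only [Finset.mem_symmDiff, hmap]
  have hF' : IsFolner F' := by
    constructor
    · exact fun n => Finset.Nonempty.map (hF.1 n)
    · intro K
      have him : ∀ n, Finset.image₂ (· * ·) K (F' n)
          = (Finset.image₂ (· * ·) K (F n)).map e := by
        intro n
        ext z
        rw [hmap]
        simp only [hF'def, Finset.mem_image₂, hmap]
        constructor
        · rintro ⟨k, hk, b, hb, rfl⟩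
          exact ⟨k, hk, b * g⁻¹, hb, by group⟩
        · rintro ⟨k, hk, b, hb, hkb⟩
          refine ⟨k, hk, b * g, by simpa using hb, ?_⟩
          calc k * (b * g) = (k * b) * g := (mul_assoc _ _ _).symm
            _ = (z * g⁻¹) * g := by rw [hkb]
            _ = z := by group
      have heqfun : (fun n => ((symmDiff (F' n) (Finset.image₂ (· * ·) K (F' n))).card : ℝ)
          / (F' n).card)
          = fun n => ((symmDiff (F n) (Finset.image₂ (· * ·) K (F n))).card : ℝ)
          / (F n).card := by
        funext n
        have h1 : F' n = (F n).map e := by rw [hF'def]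
        rw [h1, him, hsd, Finset.card_map, Finset.card_map]
      rw [heqfun]
      exact hF.2 K
  have haeq : folnerAvg F (((fun k => k * g) ⁻¹' S).indicator fun _ => (1:ℝ))
      = folnerAvg F' (S.indicator fun _ => (1:ℝ)) := by
    funext n
    have hsum : ∑ k ∈ F n, ((fun k => k * g) ⁻¹' S).indicator (fun _ => (1:ℝ)) k
        = ∑ k ∈ F n, S.indicator (fun _ => (1:ℝ)) (e k) := by
      refine Finset.sum_congr rfl fun k _ => ?_
      have hek : e k = k * g := rfl
      rw [hek]
      by_cases h : k * g ∈ S <;>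
        simp [Set.indicator_apply, h, Set.mem_preimage]
    simp only [folnerAvg, hF'def, Finset.card_map, Finset.sum_map, hsum]
  rw [haeq]
  exact le_uBD F' hF' S

lemma uBD_le_translate (hG : ∃ F : ℕ → Finset G, IsFolner F) (g : G) (S : Set G) :
    uBD S ≤ uBD ((fun k => k * g) ⁻¹' S) := by
  have hS : S = (fun k => k * g⁻¹) ⁻¹' ((fun k => k * g) ⁻¹' S) := by
    ext k; simp
  nth_rewrite 1 [hS]
  exact uBD_translate_le hG g⁻¹ _

end Helpers

section DiamHelpers
variable {X : Type*} [MetricSpace X]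

lemma minDist_nonneg (m : ℕ) (x : Fin m → X) : 0 ≤ minDist m x := by
  apply Real.sInf_nonneg
  rintro r ⟨i, j, _, rfl⟩
  exact dist_nonneg

lemma minDist_le_diam_univ [CompactSpace X] (m : ℕ) (x : Fin m → X) :
    minDist m x ≤ diam (Set.univ : Set X) := by
  by_cases h : {r | ∃ i j : Fin m, i < j ∧ r = dist (x i) (x j)}.Nonempty
  · obtain ⟨r, i, j, hij, hr⟩ := h
    refine le_trans (csInf_le ⟨0, ?_⟩ ⟨i, j, hij, hr⟩) ?_
    · rintro s ⟨i', j', _, rfl⟩; exact dist_nonneg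
    · rw [hr]
      exact dist_le_diam_of_mem
        (isCompact_univ.isBounded) (Set.mem_univ _) (Set.mem_univ _)
  · rw [Set.not_nonempty_iff_eq_empty] at h
    rw [minDist, h, Real.sInf_empty]
    exact diam_nonneg

lemma diamm_nonneg (m : ℕ) (A : Set X) : 0 ≤ diamm m A := by
  apply Real.sSup_nonneg
  rintro r ⟨x, hx, rfl⟩
  exact minDist_nonneg m x

lemma diamm_mono [CompactSpace X] (m : ℕ) {A B : Set X} (h : A ⊆ B) :
    diamm m A ≤ diamm m B := by
  refine Real.sSup_le ?_ (diamm_nonneg m B)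
  rintro r ⟨x, hx, rfl⟩
  refine le_csSup ⟨diam (Set.univ : Set X), ?_⟩ ⟨x, fun i => h (hx i), rfl⟩
  rintro s ⟨y, hy, rfl⟩
  exact minDist_le_diam_univ m y

end DiamHelpers

section MainHelpers
variable {G X : Type*} [Group G] [MetricSpace X] [CompactSpace X] [MulAction G X]
  [ContinuousConstSMul G X]

lemma FSset_isOpen (hG : ∃ F : ℕ → Finset G, IsFolner F) (m : ℕ) (ε : ℝ) :
    IsOpen (FSset G X m ε) := by
  rw [Metric.isOpen_iff]
  rintro x ⟨δ, hδ, hu⟩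
  refine ⟨δ / 2, by positivity, fun y hy => ⟨δ / 2, by positivity, lt_of_lt_of_le hu ?_⟩⟩
  refine uBD_mono hG fun g hg => ?_
  have hb : ball y (δ / 2) ⊆ ball x δ := by
    refine ball_subset_ball' ?_
    rw [mem_ball] at hy
    linarith [hy.le]
  exact lt_of_le_of_lt (diamm_mono m (smul_set_mono hb)) hg

lemma FSset_smul_mem (hG : ∃ F : ℕ → Finset G, IsFolner F) (m : ℕ) (ε : ℝ) (g : G)
    {x : X} (hx : x ∈ FSset G X m ε) : g • x ∈ FSset G X m ε := by
  obtain ⟨δ, hδ, hu⟩ := hx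
  have hopen : IsOpen (g • ball x δ) := isOpen_ball.smul g
  have hmem : g • x ∈ g • ball x δ := Set.smul_mem_smul_set (mem_ball_self hδ)
  obtain ⟨δ', hδ', hsub⟩ := Metric.isOpen_iff.1 hopen _ hmem
  refine ⟨δ', hδ', lt_of_lt_of_le hu ?_⟩
  calc uBD {h : G | diamm m (h • ball x δ) < ε}
      ≤ uBD ((fun k => k * g) ⁻¹' {h : G | diamm m (h • ball x δ) < ε}) :=
        uBD_le_translate hG g _
    _ ≤ uBD {g' : G | diamm m (g' • ball (g • x) δ') < ε} := by
        refine uBD_mono hG fun k hk => ?_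
        have h1 : k • ball (g • x) δ' ⊆ k • (g • ball x δ) := smul_set_mono hsub
        rw [smul_smul] at h1
        exact lt_of_le_of_lt (diamm_mono m h1) hk

lemma FSset_dense (hG : ∃ F : ℕ → Finset G, IsFolner F)
    (htrans : ∃ x : X, Dense (MulAction.orbit G x : Set X)) (m : ℕ) (ε : ℝ)
    (hne : (FSset G X m ε).Nonempty) : Dense (FSset G X m ε) := by
  obtain ⟨x₀, hx₀⟩ := htrans
  obtain ⟨z, hzF, hzO⟩ := hx₀.inter_open_nonempty _ (FSset_isOpen hG m ε) hne
  obtain ⟨g, rfl⟩ := hzO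
  refine hx₀.mono ?_
  rintro _ ⟨h, rfl⟩
  have := FSset_smul_mem hG m ε ((h : G) * g⁻¹) hzF
  rwa [smul_smul, inv_mul_cancel_right] at this
end MainHelpers

/-- Auslander–Yorke dichotomy for frequent stability,
transitive case: either the frequent `m`-stability points form a dense `G_δ`
set, or `(X,G)` is strongly `m`-spreading; the alternatives exclude each other. -/
theorem auslander_yorke_freq_stability_transitive {G X : Type*} [Group G]
    [Countable G] [Infinite G] [MetricSpace X] [CompactSpace X] [MulAction G X]
    [ContinuousConstSMul G X]
    (hG : ∃ F : ℕ → Finset G, IsFolner F)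
    (htrans : ∃ x : X, Dense (MulAction.orbit G x : Set X)) (m : ℕ) :
    Xor' (Dense (FreqStablePts G X m) ∧ IsGδ (FreqStablePts G X m))
      (StronglySpreading G X m) := by
  obtain ⟨x₀, hx₀⟩ := htrans
  haveI : Nonempty X := ⟨x₀⟩
  by_cases hs : StronglySpreading G X m
  · refine Or.inr ⟨hs, ?_⟩
    rintro ⟨hd, -⟩
    obtain ⟨ε, hε, h0⟩ := hs
    obtain ⟨x, hx⟩ := hd.nonempty
    obtain ⟨δ, hδ, hA⟩ := hx ε hε
    have h1 := hA (ball x (δ / 3)) (mem_ball_self (by positivity))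
      (lt_of_le_of_lt (diam_ball (by positivity)) (by linarith))
    rw [h0 _ isOpen_ball ⟨x, mem_ball_self (by positivity)⟩] at h1
    exact lt_irrefl 0 h1
  · refine Or.inl ⟨?_, hs⟩
    rw [StronglySpreading] at hs
    push_neg at hs
    have hFSne : ∀ ε : ℝ, 0 < ε → (FSset G X m ε).Nonempty := by
      intro ε hε
      obtain ⟨U, hUo, hUne, hU0⟩ := hs ε hε
      obtain ⟨x, hxU⟩ := hUne
      obtain ⟨δ, hδ, hsub⟩ := Metric.isOpen_iff.1 hUo x hxU
      refine ⟨x, δ, hδ, lt_of_le_of_ne (uBD_nonneg hG _) (Ne.symm ?_)⟩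
      intro hc
      apply hU0
      refine le_antisymm ?_ (uBD_nonneg hG _)
      rw [← hc]
      exact uBD_mono hG fun g hg =>
        lt_of_le_of_lt (diamm_mono m (smul_set_mono hsub)) hg
    have hFSd : ∀ ε : ℝ, 0 < ε → Dense (FSset G X m ε) := fun ε hε =>
      FSset_dense hG ⟨x₀, hx₀⟩ m ε (hFSne ε hε)
    have heq : FreqStablePts G X m = ⋂ n : ℕ, FSset G X m (1 / (n + 1)) := by
      apply Set.Subset.antisymm
      · intro x hx
        rw [Set.mem_iInter]
        intro n
        obtain ⟨δ, hδ, hA⟩ := hx (1 / ((n : ℝ) + 1)) (by positivity)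
        exact ⟨δ / 3, by positivity, hA (ball x (δ / 3)) (mem_ball_self (by positivity))
          (lt_of_le_of_lt (diam_ball (by positivity)) (by linarith))⟩
      · intro x hx ε hε
        obtain ⟨n, hn⟩ := exists_nat_one_div_lt hε
        obtain ⟨δ, hδ, hu⟩ := Set.mem_iInter.1 hx n
        refine ⟨δ, hδ, fun A hxA hdA => lt_of_lt_of_le hu (uBD_mono hG ?_)⟩
        intro g hg
        have hAb : A ⊆ ball x δ := by
          intro y hy
          rw [mem_ball]
          exact lt_of_le_of_lt (dist_le_diam_of_mem
            (isCompact_univ.isBounded.subset (Set.subset_univ A)) hy hxA) hdA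
        exact lt_trans (lt_of_le_of_lt (diamm_mono m (smul_set_mono hAb)) hg) hn
    constructor
    · rw [heq]
      exact dense_iInter_of_isOpen (fun n => FSset_isOpen hG m _)
        (fun n => hFSd _ (by positivity))
    · rw [heq]
      exact IsGδ.iInter fun n => (FSset_isOpen hG m _).isGδ
end

section
/- Let (X,G) be a topological dynamical system (G countably infinite discrete amenable) with a transitive point x, and m ∈ ℕ. If x is a diam-mean m-sensitive point (there exists ε > 0 such that sup_F limsup_n (1/|F_n|) Σ_{g∈F_n} diam_m(gU) ≥ ε for every open neighbourhood U of x), then (X,G) is diam-mean m-sensitive: the same inequality holds for every nonempty open subset V of X (with the same ε). -/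
open Filter Metric Set Pointwise MulAction
open scoped Classical

section Aux

variable {X : Type*} [MetricSpace X]

lemma minDist_le_diam [CompactSpace X] (m : ℕ) (x : Fin m → X) :
    minDist m x ≤ Metric.diam (univ : Set X) := by
  rcases Set.eq_empty_or_nonempty {r | ∃ i j : Fin m, i < j ∧ r = dist (x i) (x j)}
      with h | ⟨r, i, j, hij, hr⟩
  · rw [minDist, h, Real.sInf_empty]
    exact Metric.diam_nonneg
  · refine csInf_le_of_le ⟨0, ?_⟩ ⟨i, j, hij, hr⟩ ?_
    · rintro s ⟨i', j', _, rfl⟩; exact dist_nonneg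
    · rw [hr]
      by_cases hb : Bornology.IsBounded (univ : Set X)
      · exact Metric.dist_le_diam_of_mem hb (mem_univ _) (mem_univ _)
      · exact absurd isCompact_univ.isBounded hb

lemma diamm_le_diam [CompactSpace X] (m : ℕ) (A : Set X) :
    diamm m A ≤ Metric.diam (univ : Set X) := by
  apply Real.sSup_le _ Metric.diam_nonneg
  rintro r ⟨y, _, rfl⟩
  exact minDist_le_diam m y

end Aux

lemma isFolner_mul_right {G : Type*} [Group G] {F : ℕ → Finset G}
    (hF : IsFolner F) (h : G) : IsFolner (fun n => (F n).image (· * h)) := by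
  have hinj : Function.Injective (· * h) := mul_left_injective h
  constructor
  · exact fun n => ((hF.1 n).image _)
  · intro K
    have key : ∀ n, ((symmDiff ((F n).image (· * h))
        (Finset.image₂ (· * ·) K ((F n).image (· * h)))).card : ℝ) /
        ((F n).image (· * h)).card
        = ((symmDiff (F n) (Finset.image₂ (· * ·) K (F n))).card : ℝ) / (F n).card := by
      intro n
      have h1 : Finset.image₂ (· * ·) K ((F n).image (· * h))
          = (Finset.image₂ (· * ·) K (F n)).image (· * h) := by
        rw [Finset.image₂_image_right, Finset.image_image₂]
        simp [mul_assoc]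
      rw [h1, ← Finset.image_symmDiff _ _ hinj,
        Finset.card_image_of_injective _ hinj, Finset.card_image_of_injective _ hinj]
    simpa only [key] using hF.2 K

/-- if a transitive point is diam-mean `m`-sensitive (with
constant `ε`), then the whole system is diam-mean `m`-sensitive (with the
same `ε`). -/
theorem diam_mean_sensitive_of_transitive_point {G X : Type*} [Group G]
    [Countable G] [Infinite G] [MetricSpace X] [CompactSpace X] [MulAction G X]
    [ContinuousConstSMul G X]
    (hG : ∃ F : ℕ → Finset G, IsFolner F)
    (x : X) (hx : Dense (MulAction.orbit G x : Set X)) (m : ℕ) (ε : ℝ)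
    (hε : 0 < ε)
    (hsens : ∀ U : Set X, IsOpen U → x ∈ U →
      ε ≤ supFolnerLimsup (fun g : G => diamm m (g • U))) :
    ∀ V : Set X, IsOpen V → V.Nonempty →
      ε ≤ supFolnerLimsup (fun g : G => diamm m (g • V)) := by
  intro V hV hVne
  -- find h with h • x ∈ V
  obtain ⟨v, hvV⟩ := hVne
  obtain ⟨y, hyV, hyo⟩ := hx.inter_open_nonempty V hV ⟨v, hvV⟩
  obtain ⟨h, rfl⟩ := hyo
  have hhx : h • x ∈ V := hyV
  set U : Set X := h⁻¹ • V with hU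
  have hUopen : IsOpen U := hV.smul h⁻¹
  have hxU : x ∈ U := by
    rw [hU, Set.mem_inv_smul_set_iff]
    exact hhx
  have hkey := hsens U hUopen hxU
  set ψ : G → ℝ := fun g : G => diamm m (g • V) with hψ
  set φ : G → ℝ := fun g : G => diamm m (g • U) with hφ
  have hφψ : ∀ g : G, φ g = ψ (g * h⁻¹) := by
    intro g
    simp only [hφ, hψ, hU, smul_smul]
  -- bounds on ψ-averages
  have hψ0 : ∀ g, 0 ≤ ψ g := fun g => diamm_nonneg m _
  have hψC : ∀ g, ψ g ≤ Metric.diam (univ : Set X) := fun g => diamm_le_diam m _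
  have hbdd : BddAbove {a | ∃ F : ℕ → Finset G, IsFolner F ∧
      a = limsup (folnerAvg F ψ) atTop} := by
    refine ⟨Metric.diam (univ : Set X), ?_⟩
    rintro a ⟨F, hF, rfl⟩
    have havg : ∀ n, folnerAvg F ψ n ≤ Metric.diam (univ : Set X) := by
      intro n
      have hcard : (0 : ℝ) < (F n).card := by
        exact_mod_cast Finset.card_pos.mpr (hF.1 n)
      rw [folnerAvg, div_le_iff₀ hcard]
      calc ∑ g ∈ F n, ψ g ≤ ∑ g ∈ F n, Metric.diam (univ : Set X) :=
            Finset.sum_le_sum fun g _ => hψC g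
        _ = Metric.diam (univ : Set X) * (F n).card := by
            rw [Finset.sum_const, nsmul_eq_mul, mul_comm]
    have havg0 : ∀ n, 0 ≤ folnerAvg F ψ n := by
      intro n
      exact div_nonneg (Finset.sum_nonneg fun g _ => hψ0 g) (Nat.cast_nonneg _)
    refine limsup_le_of_le ?_ (Eventually.of_forall havg)
    exact Filter.isCoboundedUnder_le_of_le atTop havg0
  -- the φ-set is contained in the ψ-set
  have hsub : {a | ∃ F : ℕ → Finset G, IsFolner F ∧ a = limsup (folnerAvg F φ) atTop}
      ⊆ {a | ∃ F : ℕ → Finset G, IsFolner F ∧ a = limsup (folnerAvg F ψ) atTop} := by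
    rintro a ⟨F, hF, rfl⟩
    refine ⟨fun n => (F n).image (· * h⁻¹), isFolner_mul_right hF h⁻¹, ?_⟩
    have : ∀ n, folnerAvg (fun n => (F n).image (· * h⁻¹)) ψ n = folnerAvg F φ n := by
      intro n
      rw [folnerAvg, folnerAvg,
        Finset.sum_image (fun a _ b _ hab => mul_left_injective h⁻¹ hab),
        Finset.card_image_of_injective _ (mul_left_injective h⁻¹)]
      congr 1
      exact Finset.sum_congr rfl fun g _ => (hφψ g).symm
    exact congrArg (fun f => limsup f atTop) (funext this).symm
  have hne : {a | ∃ F : ℕ → Finset G, IsFolner F ∧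
      a = limsup (folnerAvg F φ) atTop}.Nonempty := by
    obtain ⟨F, hF⟩ := hG
    exact ⟨_, F, hF, rfl⟩
  calc ε ≤ supFolnerLimsup φ := hkey
    _ ≤ supFolnerLimsup ψ := csSup_le_csSup hbdd hne hsub
end

section
/- Let (X,G) be a topological dynamical system, m ∈ ℕ and ε > 0. If (X,G) is strongly (ε,m)-spreading, then for every δ > 0 there exist N ∈ ℕ and tuples x^(1),…,x^(N) ∈ X^m_ε such that for every nonempty open U ⊆ X, the set { g ∈ G : ∃ k ≤ N with gU ∩ B(x^(k)_i, δ) ≠ ∅ for all i = 1,…,m } has lower Banach density 1. -/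
open Filter Metric Set Pointwise MulAction
open scoped Classical

section AuxLemmas

variable {G : Type*} [Group G]

lemma aux_avg_nonneg (A : Set G) (F : ℕ → Finset G) (n : ℕ) :
    0 ≤ folnerAvg F (A.indicator fun _ => (1 : ℝ)) n :=
  div_nonneg (Finset.sum_nonneg fun g _ =>
    Set.indicator_nonneg (fun _ _ => zero_le_one) g) (Nat.cast_nonneg _)

lemma aux_avg_le_one (A : Set G) (F : ℕ → Finset G) (hF : ∀ n, (F n).Nonempty) (n : ℕ) :
    folnerAvg F (A.indicator fun _ => (1 : ℝ)) n ≤ 1 := by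
  have hc : (0 : ℝ) < (F n).card := by
    exact_mod_cast Finset.card_pos.mpr (hF n)
  rw [folnerAvg, div_le_one hc]
  calc ∑ g ∈ F n, A.indicator (fun _ => (1 : ℝ)) g
      ≤ ∑ _g ∈ F n, (1 : ℝ) := Finset.sum_le_sum fun g _ => by
        by_cases h : g ∈ A <;> simp [Set.indicator_apply, h]
    _ = (F n).card := by simp

lemma aux_lBD_eq_one_of_subset (hG : ∃ F : ℕ → Finset G, IsFolner F)
    {S T : Set G} (hST : S ⊆ T) (hS : lBD S = 1) : lBD T = 1 := by
  set AS : Set ℝ := {a | ∃ F : ℕ → Finset G, IsFolner F ∧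
    a = liminf (folnerAvg F (S.indicator fun _ => (1 : ℝ))) atTop} with hAS
  set AT : Set ℝ := {a | ∃ F : ℕ → Finset G, IsFolner F ∧
    a = liminf (folnerAvg F (T.indicator fun _ => (1 : ℝ))) atTop} with hAT
  have key : ∀ F : ℕ → Finset G, IsFolner F →
      liminf (folnerAvg F (T.indicator fun _ => (1 : ℝ))) atTop = 1 := by
    intro F hF
    set uS := folnerAvg F (S.indicator fun _ => (1 : ℝ)) with huS
    set uT := folnerAvg F (T.indicator fun _ => (1 : ℝ)) with huT
    have hmono : ∀ n, uS n ≤ uT n := by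
      intro n
      have hptwise : ∀ g : G, S.indicator (fun _ => (1 : ℝ)) g ≤
          T.indicator (fun _ => (1 : ℝ)) g := fun g =>
        Set.indicator_le_indicator_of_subset hST (fun _ => zero_le_one) g
      have : ∑ g ∈ F n, S.indicator (fun _ => (1 : ℝ)) g ≤
          ∑ g ∈ F n, T.indicator (fun _ => (1 : ℝ)) g :=
        Finset.sum_le_sum fun g _ => hptwise g
      exact div_le_div_of_nonneg_right this (Nat.cast_nonneg _) |>.trans_eq rfl
    have hSa : IsBoundedUnder (· ≤ ·) atTop uS :=
      isBoundedUnder_of ⟨1, fun n => aux_avg_le_one S F hF.1 n⟩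
    have hScob : IsCoboundedUnder (· ≥ ·) atTop uS := hSa.isCoboundedUnder_ge
    have hTa : IsBoundedUnder (· ≤ ·) atTop uT :=
      isBoundedUnder_of ⟨1, fun n => aux_avg_le_one T F hF.1 n⟩
    have hTcob : IsCoboundedUnder (· ≥ ·) atTop uT := hTa.isCoboundedUnder_ge
    have hTb : IsBoundedUnder (· ≥ ·) atTop uT :=
      isBoundedUnder_of ⟨0, fun n => aux_avg_nonneg T F n⟩
    have hSb : IsBoundedUnder (· ≥ ·) atTop uS :=
      isBoundedUnder_of ⟨0, fun n => aux_avg_nonneg S F n⟩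
    have h1 : liminf uS atTop ≤ liminf uT atTop :=
      liminf_le_liminf (Eventually.of_forall hmono) hSb hTcob
    have h2 : liminf uT atTop ≤ 1 := by
      have := liminf_le_liminf (f := (atTop : Filter ℕ))
        (Eventually.of_forall fun n => aux_avg_le_one T F hF.1 n) hTb
        (isBoundedUnder_of (⟨1, fun _ => le_refl (1 : ℝ)⟩ :
          ∃ b, ∀ n : ℕ, (fun _ : ℕ => (1:ℝ)) n ≤ b)).isCoboundedUnder_ge
      simpa [liminf_const] using this
    have hbddAS : BddBelow AS := by
      refine ⟨0, ?_⟩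
      rintro a ⟨F', hF', rfl⟩
      exact le_liminf_of_le
        (isBoundedUnder_of ⟨1, fun n => aux_avg_le_one S F' hF'.1 n⟩).isCoboundedUnder_ge
        (Eventually.of_forall fun n => aux_avg_nonneg S F' n)
    have h3 : (1 : ℝ) ≤ liminf uS atTop := by
      have hmem : liminf uS atTop ∈ AS := ⟨F, hF, rfl⟩
      have := csInf_le hbddAS hmem
      rw [show sInf AS = lBD S from rfl, hS] at this
      exact this
    linarith
  obtain ⟨F0, hF0⟩ := hG
  have hAT1 : AT = {1} := by
    ext a
    constructor
    · rintro ⟨F, hF, rfl⟩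
      exact key F hF
    · rintro rfl
      exact ⟨F0, hF0, (key F0 hF0).symm⟩
  rw [show lBD T = sInf AT from rfl, hAT1, csInf_singleton]

end AuxLemmas

/-- a strongly `(ε,m)`-spreading system admits, for every
`δ > 0`, finitely many tuples in `X^m_ε` witnessing the spreading along sets
of lower Banach density one. -/
theorem spreading_tuples_of_strongly_spreading {G X : Type*} [Group G]
    [Countable G] [Infinite G] [MetricSpace X] [CompactSpace X] [MulAction G X]
    [ContinuousConstSMul G X]
    (hG : ∃ F : ℕ → Finset G, IsFolner F) (m : ℕ) (ε : ℝ) (hε : 0 < ε)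
    (hspread : ∀ U : Set X, IsOpen U → U.Nonempty →
      lBD {g : G | ε < diamm m (g • U)} = 1) :
    ∀ δ > 0, ∃ (N : ℕ) (x : Fin N → Fin m → X),
      (∀ k, ∀ i j : Fin m, i < j → ε ≤ dist (x k i) (x k j)) ∧
      ∀ U : Set X, IsOpen U → U.Nonempty →
        lBD {g : G | ∃ k, ∀ i, ((g • U) ∩ ball (x k i) δ).Nonempty} = 1 := by
  intro δ hδ
  set K : Set (Fin m → X) := {z | ∀ i j : Fin m, i < j → ε ≤ dist (z i) (z j)} with hK
  have hKclosed : IsClosed K := by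
    have : K = ⋂ (i : Fin m) (j : Fin m) (_ : i < j),
        {z : Fin m → X | ε ≤ dist (z i) (z j)} := by
      ext z; simp [hK, Set.mem_iInter]
    rw [this]
    exact isClosed_iInter fun i => isClosed_iInter fun j => isClosed_iInter fun _ =>
      isClosed_le continuous_const ((continuous_apply i).dist (continuous_apply j))
  have hKcomp : IsCompact K := hKclosed.isCompact
  obtain ⟨t, ht⟩ := hKcomp.elim_finite_subcover
    (fun y : K => Set.univ.pi fun i => ball (y.1 i) δ)
    (fun y => isOpen_set_pi Set.finite_univ fun i _ => isOpen_ball)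
    (fun z hz => Set.mem_iUnion.mpr ⟨⟨z, hz⟩,
      Set.mem_univ_pi.mpr fun i => mem_ball_self hδ⟩)
  refine ⟨t.card, fun k i => ((t.equivFin.symm k : {a // a ∈ t}) : K).1 i, ?_, ?_⟩
  · intro k i j hij
    exact ((t.equivFin.symm k : {a // a ∈ t}) : K).2 i j hij
  · intro U hU hUne
    refine aux_lBD_eq_one_of_subset hG ?_ (hspread U hU hUne)
    intro g hg
    simp only [Set.mem_setOf_eq] at hg ⊢
    -- extract a tuple with large minimal distance
    have hDne : {r | ∃ z : Fin m → X, (∀ i, z i ∈ g • U) ∧ r = minDist m z}.Nonempty := by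
      by_contra hcon
      rw [Set.not_nonempty_iff_eq_empty] at hcon
      rw [diamm, hcon, Real.sSup_empty] at hg
      linarith
    obtain ⟨r, hrmem, hr⟩ := exists_lt_of_lt_csSup hDne hg
    obtain ⟨z, hzU, rfl⟩ := hrmem
    have hzK : z ∈ K := by
      intro i j hij
      have hbdd : BddBelow {r | ∃ i j : Fin m, i < j ∧ r = dist (z i) (z j)} := by
        refine ⟨0, ?_⟩
        rintro r ⟨i', j', _, rfl⟩
        exact dist_nonneg
      have : minDist m z ≤ dist (z i) (z j) := csInf_le hbdd ⟨i, j, hij, rfl⟩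
      linarith
    obtain ⟨y, hyt, hy⟩ := Set.mem_iUnion₂.mp (ht hzK)
    refine ⟨t.equivFin ⟨y, hyt⟩, fun i => ⟨z i, hzU i, ?_⟩⟩
    have heq : ((t.equivFin.symm (t.equivFin ⟨y, hyt⟩) : {a // a ∈ t}) : K) = y := by
      simp
    rw [heq]
    exact Set.mem_univ_pi.mp hy i
end
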